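/- For all p > 0 and x ∈ ℝ one has φ(x,p) ≤ υ + x²/(2ap). -/
import Mathlib


/-- The function `φ(x,p) = ln Σ_{n≥0} (υⁿ/n!)·exp(xn − (ap/2)n²)`. -/
noncomputable def phi (υ a x p : ℝ) : ℝ :=
  Real.log (∑' n : ℕ, (υ ^ n / (Nat.factorial n : ℝ)) *
    Real.exp (x * n - (a * p / 2) * (n : ℝ) ^ 2))


theorem stmt_15 (υ a : ℝ) (hυ : 0 < υ) (ha : 1 < a) (p x : ℝ) (hp : 0 < p) :
    phi υ a x p ≤ υ + x ^ 2 / (2 * a * p) := by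
  have hap : 0 < a * p := mul_pos (lt_trans one_pos ha) hp
  set c := x ^ 2 / (2 * a * p) with hc
  set f : ℕ → ℝ := fun n => (υ ^ n / (Nat.factorial n : ℝ)) *
    Real.exp (x * n - (a * p / 2) * (n : ℝ) ^ 2) with hf
  set g : ℕ → ℝ := fun n => (υ ^ n / (Nat.factorial n : ℝ)) * Real.exp c with hg
  have hfnonneg : ∀ n, 0 ≤ f n := fun n =>
    mul_nonneg (div_nonneg (pow_nonneg hυ.le n) (Nat.cast_nonneg _)) (Real.exp_pos _).le
  have hbound : ∀ n, f n ≤ g n := by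
    intro n
    apply mul_le_mul_of_nonneg_left _ (div_nonneg (pow_nonneg hυ.le n) (Nat.cast_nonneg _))
    apply Real.exp_le_exp.mpr
    have key : x * n - (a * p / 2) * (n : ℝ) ^ 2 - c = -(x - a * p * n) ^ 2 / (2 * a * p) := by
      rw [hc]; field_simp; ring
    have hnp : -(x - a * p * n) ^ 2 / (2 * a * p) ≤ 0 :=
      div_nonpos_of_nonpos_of_nonneg (neg_nonpos.mpr (sq_nonneg _)) (by linarith)
    linarith [key]
  have hgsum : Summable g := (Real.summable_pow_div_factorial υ).mul_right _
  have hfsum : Summable f := Summable.of_nonneg_of_le hfnonneg hbound hgsum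
  have htsumg : ∑' n, g n = Real.exp υ * Real.exp c := by
    rw [hg, tsum_mul_right]
    congr 1
    rw [Real.exp_eq_exp_ℝ, NormedSpace.exp_eq_tsum_div]
  have hle : ∑' n, f n ≤ Real.exp (υ + c) := by
    rw [Real.exp_add, ← htsumg]
    exact Summable.tsum_le_tsum hbound hfsum hgsum
  have hpos : 0 < ∑' n, f n := by
    have h0 : 0 < f 0 := by
      simp [hf, Nat.factorial]
    exact h0.trans_le (Summable.le_tsum hfsum 0 fun n _ => hfnonneg n)
  calc phi υ a x p = Real.log (∑' n, f n) := rfl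
    _ ≤ Real.log (Real.exp (υ + c)) := Real.log_le_log hpos hle
    _ = υ + c := Real.log_exp _
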